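/- Fix an integer d ≥ 3. There exist a closed, uncountable set E ⊂ ℝ and a constant ε₀ > 0 such that for every function ε : ℕ → ℝ with ε(n) ≤ ε₀ for all n and every α ∈ E, the set B(ε,α,d) = {n ∈ ℕ : ‖α·n^d‖ ≤ ε(n)} is not a basis of order 2; that is, infinitely many natural numbers are not sums of two elements of B(ε,α,d). -/

import Mathlib

open Filter
open scoped Pointwise

/-- Distance to the nearest integer. -/
noncomputable def fpa (t : ℝ) : ℝ := |t - round t|

/-- `B ε α d = {n ∈ ℕ : ‖α n^d‖ ≤ ε n}`. -/
def B (ε : ℕ → ℝ) (α : ℝ) (d : ℕ) : Set ℕ := {n : ℕ | fpa (α * (n : ℝ) ^ d) ≤ ε n}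

/-!
If `N` is odd, `α` lies within `1 / (8 N ^ d)` of `1 / 2 + s / N` and `N = a + b`, then
`c = a ^ d - (-b) ^ d` is odd, divisible by `a + b = N` and `|c| ≤ N ^ d`, so `α c` lies within
`1 / 8` of a half-integer. But `α c = α a ^ d ∓ α b ^ d` lies within `‖α a ^ d‖ + ‖α b ^ d‖` of an
integer, so `a` and `b` cannot both lie in `B ε α d` once `ε ≤ 1 / 8`.

The numbers `α = 1 / 2 + ∑ x_k / N_k` with `x ∈ {0, 1}^ℕ` and `N_k = 3 ^ (d + 2) ^ (k + 1)` are
approximated this well by `1 / 2 + s / N_k` for every `k`, since `N_{k+1} = N_k ^ (d + 2)`. They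
form a continuous injective image of the Cantor space, hence a closed uncountable set.
-/

lemma fpa_le_abs_sub_intCast (x : ℝ) (m : ℤ) : fpa x ≤ |x - m| := round_le x m

lemma fpa_le_abs (x : ℝ) : fpa x ≤ |x| := by
  simpa using fpa_le_abs_sub_intCast x 0

lemma fpa_add_le (x y : ℝ) : fpa (x + y) ≤ fpa x + fpa y :=
  calc fpa (x + y) ≤ |x + y - ↑(round x + round y)| := fpa_le_abs_sub_intCast _ _
    _ = |(x - round x) + (y - round y)| := by push_cast; ring_nf
    _ ≤ fpa x + fpa y := abs_add_le _ _

lemma fpa_neg (x : ℝ) : fpa (-x) = fpa x := by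
  have fpa_neg_le (y : ℝ) : fpa (-y) ≤ fpa y :=
    calc fpa (-y) ≤ |-y - ↑(-round y)| := fpa_le_abs_sub_intCast _ _
      _ = fpa y := by rw [fpa, ← abs_neg]; push_cast; ring_nf
  exact le_antisymm (fpa_neg_le x) (by simpa using fpa_neg_le (-x))

lemma fpa_neg_one_pow_mul (d : ℕ) (x : ℝ) : fpa ((-1) ^ d * x) = fpa x := by
  rcases neg_one_pow_eq_or ℝ d with h | h <;> simp [h, fpa_neg]

lemma fpa_sub_le (x y : ℝ) : fpa (x - y) ≤ fpa x + fpa y := by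
  simpa [sub_eq_add_neg, fpa_neg] using fpa_add_le x (-y)

lemma fpa_intCast_add (m : ℤ) (x : ℝ) : fpa (m + x) = fpa x := by
  rw [fpa, fpa, round_intCast_add]; push_cast; ring_nf

lemma fpa_half : fpa (1 / 2) = 1 / 2 := by
  norm_num [fpa, round_eq]

lemma half_sub_abs_le_fpa_half_add (t : ℝ) : 1 / 2 - |t| ≤ fpa (1 / 2 + t) := by
  have := fpa_add_le (1 / 2 + t) (-t)
  rw [add_neg_cancel_right, fpa_half] at this
  linarith [fpa_le_abs (-t), abs_neg t]

lemma odd_pow_sub_neg_pow {a b : ℤ} {d : ℕ} (hd : d ≠ 0) (h : Odd (a + b)) :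
    Odd (a ^ d - (-b) ^ d) := by
  simpa [Int.odd_sub, Int.odd_add, Int.odd_pow' hd, Int.even_pow' hd] using h

lemma abs_pow_sub_neg_pow_le {a b : ℝ} (ha : 0 ≤ a) (hb : 0 ≤ b) {d : ℕ} (hd : d ≠ 0) :
    |a ^ d - (-b) ^ d| ≤ (a + b) ^ d :=
  calc |a ^ d - (-b) ^ d| ≤ |a ^ d| + |(-b) ^ d| := abs_sub _ _
    _ = a ^ d + b ^ d := by rw [abs_pow, abs_pow, abs_neg, abs_of_nonneg ha, abs_of_nonneg hb]
    _ ≤ (a + b) ^ d := pow_add_pow_le ha hb hd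

lemma exists_half_add_div_mul_eq {N : ℕ} (s : ℤ) {c : ℤ} (hc : Odd c) (hNc : (N : ℤ) ∣ c) :
    ∃ m : ℤ, (1 / 2 + s / N) * (c : ℝ) = m + 1 / 2 := by
  obtain ⟨k, rfl⟩ := hc
  obtain ⟨e, he⟩ := hNc
  have hN : (N : ℝ) ≠ 0 := by
    rintro hN
    rw [Nat.cast_eq_zero.mp hN] at he
    omega
  have he' : (2 * k + 1 : ℝ) = N * e := by exact_mod_cast he
  refine ⟨k + s * e, ?_⟩
  push_cast
  rw [he']
  field_simp
  linear_combination -he'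

lemma three_eighths_le_fpa_mul {N : ℕ} {α : ℝ} {s c : ℤ} (hc : Odd c) (hNc : (N : ℤ) ∣ c)
    (hα : |α - (1 / 2 + s / N)| * |(c : ℝ)| ≤ 1 / 8) : 3 / 8 ≤ fpa (α * c) := by
  obtain ⟨m, hm⟩ := exists_half_add_div_mul_eq s hc hNc
  have hsplit : α * c = m + (1 / 2 + (α - (1 / 2 + s / N)) * c) := by
    linear_combination hm
  rw [hsplit, fpa_intCast_add]
  refine le_trans ?_ (half_sub_abs_le_fpa_half_add _)
  rw [abs_mul]
  linarith

lemma fpa_mul_pow_sub_neg_pow_le (α a b : ℝ) (d : ℕ) :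
    fpa (α * (a ^ d - (-b) ^ d)) ≤ fpa (α * a ^ d) + fpa (α * b ^ d) := by
  have : α * (a ^ d - (-b) ^ d) = α * a ^ d - (-1) ^ d * (α * b ^ d) := by
    rw [neg_pow]; ring
  rw [this, ← fpa_neg_one_pow_mul d (α * b ^ d)]
  exact fpa_sub_le _ _

theorem notMem_B_add_B {d N : ℕ} (hd : d ≠ 0) (hN : Odd N) {ε : ℕ → ℝ}
    (hε : ∀ n, ε n ≤ 1 / 8) {α : ℝ} {s : ℤ} (hα : |α - (1 / 2 + s / N)| * N ^ d ≤ 1 / 8) :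
    N ∉ B ε α d + B ε α d := by
  intro hmem
  obtain ⟨a, ha, b, hb, rfl⟩ := Set.mem_add.mp hmem
  have hc_odd : Odd ((a : ℤ) ^ d - (-(b : ℤ)) ^ d) :=
    odd_pow_sub_neg_pow hd (by exact_mod_cast hN)
  have hc_dvd : ((a + b : ℕ) : ℤ) ∣ (a : ℤ) ^ d - (-(b : ℤ)) ^ d := by
    simpa using sub_dvd_pow_sub_pow (a : ℤ) (-b) d
  have hc_abs : |(((a : ℤ) ^ d - (-(b : ℤ)) ^ d : ℤ) : ℝ)| ≤ ((a + b : ℕ) : ℝ) ^ d := by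
    push_cast
    exact abs_pow_sub_neg_pow_le (Nat.cast_nonneg a) (Nat.cast_nonneg b) hd
  have lower := three_eighths_le_fpa_mul hc_odd hc_dvd (s := s) (α := α)
    ((mul_le_mul_of_nonneg_left hc_abs (abs_nonneg _)).trans hα)
  have upper := fpa_mul_pow_sub_neg_pow_le α a b d
  push_cast at lower
  linarith [ha.trans (hε a), hb.trans (hε b)]

noncomputable def lacunaryTerm (q : ℕ → ℕ) (x : ℕ → Bool) (k : ℕ) : ℝ :=
  if x k then (q k : ℝ)⁻¹ else 0

noncomputable def lacunarySum (q : ℕ → ℕ) (x : ℕ → Bool) : ℝ := ∑' k, lacunaryTerm q x k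

section LacunarySeries

variable {q : ℕ → ℕ}

lemma lacunaryTerm_nonneg (x : ℕ → Bool) (k : ℕ) : 0 ≤ lacunaryTerm q x k := by
  unfold lacunaryTerm; split_ifs <;> positivity

lemma lacunaryTerm_le (x : ℕ → Bool) (k : ℕ) : lacunaryTerm q x k ≤ (q k : ℝ)⁻¹ := by
  unfold lacunaryTerm; split_ifs <;> simp

lemma inv_le_inv_mul_third_pow (hpos : ∀ k, 0 < q k) (hq : ∀ k, 3 * q k ≤ q (k + 1))
    (k j : ℕ) : (q (j + k) : ℝ)⁻¹ ≤ (q k : ℝ)⁻¹ * (1 / 3) ^ j := by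
  have hgrow : 3 ^ j * q k ≤ q (j + k) := by
    induction j with
    | zero => simp
    | succ j ih =>
      calc 3 ^ (j + 1) * q k = 3 * (3 ^ j * q k) := by ring
        _ ≤ 3 * q (j + k) := Nat.mul_le_mul_left 3 ih
        _ ≤ q (j + 1 + k) := by rw [Nat.add_right_comm]; exact hq _
  have hk : (0 : ℝ) < q k := by exact_mod_cast hpos k
  rw [one_div, inv_pow, ← mul_inv, inv_le_inv₀ (by exact_mod_cast hpos _) (by positivity),
    mul_comm]
  exact_mod_cast hgrow

lemma lacunaryTerm_shift_le (hpos : ∀ k, 0 < q k) (hq : ∀ k, 3 * q k ≤ q (k + 1))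
    (x : ℕ → Bool) (k j : ℕ) : lacunaryTerm q x (j + k) ≤ (q k : ℝ)⁻¹ * (1 / 3) ^ j :=
  (lacunaryTerm_le x _).trans (inv_le_inv_mul_third_pow hpos hq k j)

lemma summable_lacunaryTerm_shift (hpos : ∀ k, 0 < q k) (hq : ∀ k, 3 * q k ≤ q (k + 1))
    (x : ℕ → Bool) (k : ℕ) : Summable fun j => lacunaryTerm q x (j + k) :=
  .of_nonneg_of_le (fun j => lacunaryTerm_nonneg x _) (lacunaryTerm_shift_le hpos hq x k)
    ((summable_geometric_of_lt_one (by norm_num) (by norm_num)).mul_left _)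

lemma summable_lacunaryTerm (hpos : ∀ k, 0 < q k) (hq : ∀ k, 3 * q k ≤ q (k + 1))
    (x : ℕ → Bool) : Summable (lacunaryTerm q x) := by
  simpa using summable_lacunaryTerm_shift hpos hq x 0

lemma tsum_lacunaryTerm_shift_le (hpos : ∀ k, 0 < q k) (hq : ∀ k, 3 * q k ≤ q (k + 1))
    (x : ℕ → Bool) (k : ℕ) : ∑' j, lacunaryTerm q x (j + k) ≤ 3 / 2 * (q k : ℝ)⁻¹ := by
  have hgeom := summable_geometric_of_lt_one (r := (1 / 3 : ℝ)) (by norm_num) (by norm_num)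
  calc ∑' j, lacunaryTerm q x (j + k) ≤ ∑' j, (q k : ℝ)⁻¹ * (1 / 3) ^ j :=
        (summable_lacunaryTerm_shift hpos hq x k).tsum_le_tsum
          (lacunaryTerm_shift_le hpos hq x k) (hgeom.mul_left _)
    _ = 3 / 2 * (q k : ℝ)⁻¹ := by
        rw [tsum_mul_left, tsum_geometric_of_lt_one (by norm_num) (by norm_num)]; ring

lemma tsum_lacunaryTerm_shift_nonneg (x : ℕ → Bool) (k : ℕ) :
    0 ≤ ∑' j, lacunaryTerm q x (j + k) :=
  tsum_nonneg fun j => lacunaryTerm_nonneg x (j + k)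

lemma tsum_lacunaryTerm_succ_le_half (hpos : ∀ k, 0 < q k) (hq : ∀ k, 3 * q k ≤ q (k + 1))
    (x : ℕ → Bool) (k : ℕ) : ∑' j, lacunaryTerm q x (j + (k + 1)) ≤ (q k : ℝ)⁻¹ / 2 := by
  have hk : (0 : ℝ) < q k := by exact_mod_cast hpos k
  have hk1 : (3 * q k : ℝ) ≤ q (k + 1) := by exact_mod_cast hq k
  calc ∑' j, lacunaryTerm q x (j + (k + 1)) ≤ 3 / 2 * (q (k + 1) : ℝ)⁻¹ :=
        tsum_lacunaryTerm_shift_le hpos hq x (k + 1)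
    _ ≤ 3 / 2 * (3 * q k : ℝ)⁻¹ := by gcongr
    _ = (q k : ℝ)⁻¹ / 2 := by field_simp

lemma lacunarySum_eq_sum_add_tsum (hpos : ∀ k, 0 < q k) (hq : ∀ k, 3 * q k ≤ q (k + 1))
    (x : ℕ → Bool) (k : ℕ) :
    lacunarySum q x = ∑ j ∈ Finset.range k, lacunaryTerm q x j
      + ∑' j, lacunaryTerm q x (j + k) :=
  ((summable_lacunaryTerm hpos hq x).sum_add_tsum_nat_add k).symm

lemma continuous_lacunarySum (hpos : ∀ k, 0 < q k) (hq : ∀ k, 3 * q k ≤ q (k + 1)) :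
    Continuous (lacunarySum q) := by
  refine continuous_tsum (fun k => ?_) ((summable_geometric_of_lt_one (r := (1 / 3 : ℝ))
    (by norm_num) (by norm_num)).mul_left (q 0 : ℝ)⁻¹) (fun k x => ?_)
  · exact (continuous_of_discreteTopology (f := fun b : Bool => if b then (q k : ℝ)⁻¹ else 0)).comp
      (continuous_apply k)
  · rw [Real.norm_of_nonneg (lacunaryTerm_nonneg x k)]
    simpa using lacunaryTerm_shift_le hpos hq x 0 k

/-- A difference in the first digit where `x` and `y` differ outweighs both tails. -/
lemma lacunarySum_injective (hpos : ∀ k, 0 < q k) (hq : ∀ k, 3 * q k ≤ q (k + 1)) :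
    Function.Injective (lacunarySum q) := by
  intro x y hxy
  funext k
  induction k using Nat.strong_induction_on with
  | _ k ih =>
    by_contra hne
    have hprefix : ∑ j ∈ Finset.range k, lacunaryTerm q x j
        = ∑ j ∈ Finset.range k, lacunaryTerm q y j :=
      Finset.sum_congr rfl fun j hj => by
        simp only [lacunaryTerm, ih j (Finset.mem_range.mp hj)]
    have hdigit : |lacunaryTerm q x k - lacunaryTerm q y k| = (q k : ℝ)⁻¹ := by
      unfold lacunaryTerm
      cases hx : x k <;> cases hy : y k <;> simp_all
    have hx := lacunarySum_eq_sum_add_tsum hpos hq x (k + 1)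
    have hy := lacunarySum_eq_sum_add_tsum hpos hq y (k + 1)
    rw [Finset.sum_range_succ] at hx hy
    have hk : (0 : ℝ) < (q k : ℝ)⁻¹ := by have := hpos k; positivity
    rcases (abs_eq hk.le).mp hdigit with h | h <;>
      linarith [tsum_lacunaryTerm_shift_nonneg (q := q) x (k + 1),
        tsum_lacunaryTerm_shift_nonneg (q := q) y (k + 1),
        tsum_lacunaryTerm_succ_le_half hpos hq x k, tsum_lacunaryTerm_succ_le_half hpos hq y k]

lemma exists_sum_range_lacunaryTerm_eq_div (hpos : ∀ k, 0 < q k)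
    (hdvd : ∀ j k, j ≤ k → q j ∣ q k) (x : ℕ → Bool) (k : ℕ) :
    ∃ s : ℤ, ∑ j ∈ Finset.range (k + 1), lacunaryTerm q x j = s / q k := by
  refine ⟨∑ j ∈ Finset.range (k + 1), if x j then ((q k / q j : ℕ) : ℤ) else 0, ?_⟩
  rw [Int.cast_sum, Finset.sum_div]
  refine Finset.sum_congr rfl fun j hj => ?_
  unfold lacunaryTerm
  split_ifs
  · have hj : j ≤ k := Nat.lt_succ_iff.mp (Finset.mem_range.mp hj)
    have hqk : (q k : ℝ) ≠ 0 := by exact_mod_cast (hpos k).ne'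
    rw [Int.cast_natCast, Nat.cast_div (hdvd j k hj) (by exact_mod_cast (hpos j).ne')]
    field_simp
  · simp

end LacunarySeries

def lacunaryDenom (d k : ℕ) : ℕ := 3 ^ (d + 2) ^ (k + 1)

lemma lacunaryDenom_pos (d k : ℕ) : 0 < lacunaryDenom d k := by
  unfold lacunaryDenom; positivity

lemma odd_lacunaryDenom (d k : ℕ) : Odd (lacunaryDenom d k) := Odd.pow (by decide)

lemma lacunaryDenom_dvd (d : ℕ) {j k : ℕ} (h : j ≤ k) : lacunaryDenom d j ∣ lacunaryDenom d k :=
  pow_dvd_pow 3 (Nat.pow_le_pow_right (by omega) (by omega))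

lemma lacunaryDenom_succ (d k : ℕ) :
    lacunaryDenom d (k + 1) = lacunaryDenom d k ^ d * lacunaryDenom d k ^ 2 := by
  rw [← pow_add, lacunaryDenom, lacunaryDenom, ← pow_mul, pow_succ _ (k + 1)]

lemma nine_le_lacunaryDenom (d k : ℕ) : 9 ≤ lacunaryDenom d k :=
  calc 9 = 3 ^ 2 := rfl
    _ ≤ lacunaryDenom d k := Nat.pow_le_pow_right (by omega)
      ((Nat.le_add_left 2 d).trans (Nat.le_self_pow (by omega) _))

lemma twelve_mul_pow_le_lacunaryDenom_succ (d k : ℕ) :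
    12 * lacunaryDenom d k ^ d ≤ lacunaryDenom d (k + 1) := by
  rw [lacunaryDenom_succ, mul_comm]
  have := nine_le_lacunaryDenom d k
  gcongr
  nlinarith

lemma three_mul_lacunaryDenom_le (d k : ℕ) : 3 * lacunaryDenom d k ≤ lacunaryDenom d (k + 1) := by
  rw [lacunaryDenom_succ]
  have h9 := nine_le_lacunaryDenom d k
  have h1 : 1 ≤ lacunaryDenom d k ^ d := Nat.one_le_pow _ _ (lacunaryDenom_pos d k)
  nlinarith

lemma strictMono_lacunaryDenom (d : ℕ) : StrictMono (lacunaryDenom d) :=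
  strictMono_nat_of_lt_succ fun k => by
    linarith [three_mul_lacunaryDenom_le d k, lacunaryDenom_pos d k]

lemma exists_abs_lacunarySum_sub_div_mul_pow_le (d : ℕ) (x : ℕ → Bool) (k : ℕ) :
    ∃ s : ℤ, |lacunarySum (lacunaryDenom d) x - s / lacunaryDenom d k|
      * lacunaryDenom d k ^ d ≤ 1 / 8 := by
  have hpos := lacunaryDenom_pos d
  have hq := three_mul_lacunaryDenom_le d
  obtain ⟨s, hs⟩ := exists_sum_range_lacunaryTerm_eq_div hpos
    (fun _ _ => lacunaryDenom_dvd d) x k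
  refine ⟨s, ?_⟩
  rw [lacunarySum_eq_sum_add_tsum hpos hq x (k + 1), hs, add_sub_cancel_left,
    abs_of_nonneg (tsum_lacunaryTerm_shift_nonneg x _)]
  have h12 : 12 * (lacunaryDenom d k : ℝ) ^ d ≤ lacunaryDenom d (k + 1) := by
    exact_mod_cast twelve_mul_pow_le_lacunaryDenom_succ d k
  have hNk : (0 : ℝ) < lacunaryDenom d k ^ d := by have := hpos k; positivity
  calc (∑' j, lacunaryTerm (lacunaryDenom d) x (j + (k + 1))) * lacunaryDenom d k ^ d
      ≤ 3 / 2 * (lacunaryDenom d (k + 1) : ℝ)⁻¹ * lacunaryDenom d k ^ d := by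
        gcongr; exact tsum_lacunaryTerm_shift_le hpos hq x (k + 1)
    _ ≤ 3 / 2 * (12 * (lacunaryDenom d k : ℝ) ^ d)⁻¹ * lacunaryDenom d k ^ d := by gcongr
    _ = 1 / 8 := by field_simp; norm_num

lemma not_countable_range_of_injective {α : Type} {f : (ℕ → Bool) → α}
    (hf : Function.Injective f) : ¬ (Set.range f).Countable := by
  rw [← Cardinal.le_aleph0_iff_set_countable, Cardinal.mk_range_eq f hf, not_le]
  simpa using Cardinal.aleph0_lt_continuum

theorem stmt_19 (d : ℕ) (hd : 3 ≤ d) :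
    ∃ (E : Set ℝ) (ε₀ : ℝ), IsClosed E ∧ ¬ E.Countable ∧ 0 < ε₀ ∧
      ∀ ε : ℕ → ℝ, (∀ n, ε n ≤ ε₀) → ∀ α ∈ E,
        {N : ℕ | N ∉ B ε α d + B ε α d}.Infinite := by
  have hpos := lacunaryDenom_pos d
  have hq := three_mul_lacunaryDenom_le d
  refine ⟨Set.range fun x => 1 / 2 + lacunarySum (lacunaryDenom d) x, 1 / 8,
    (isCompact_range (continuous_const.add (continuous_lacunarySum hpos hq))).isClosed,
    not_countable_range_of_injective ((add_right_injective _).comp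
      (lacunarySum_injective hpos hq)), by norm_num, ?_⟩
  rintro ε hε _ ⟨x, rfl⟩
  refine Set.infinite_of_injective_forall_mem (strictMono_lacunaryDenom d).injective fun k => ?_
  obtain ⟨s, hs⟩ := exists_abs_lacunarySum_sub_div_mul_pow_le d x k
  rw [← add_sub_add_left_eq_sub _ _ (1 / 2 : ℝ)] at hs
  exact notMem_B_add_B (by omega) (odd_lacunaryDenom d k) hε hs
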